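/- Telescoping error bound for FtP matching: for each round i, dist(P_{i+1}, P_i ∪ {r_{i+1}}) ≤ η_i + d_i + η_{i+1}, where η_j = dist(P_j, OFF_j) is the prediction error at round j, OFF_j is the offline algorithm's server set after j requests, and d_i = dist(OFF_i ∪ {r_{i+1}}, OFF_{i+1}) is the cost OFF pays in round i+1. Summing over all rounds, the total cost of Follow-the-Prediction is at most OFF + 2η, so FtP is (1 + 2η/OFF)-competitive against OFF. -/

import Mathlib

/-!
Each round is bounded by two triangle inequalities, through `OFF_{i+1}` and through
`OFF_i + {r_i}`, and by the fact that adding the same point to both multisets cannot increase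
the matching distance (the new point is matched with itself). Summed over the rounds, every
error `η_j` appears at most twice. The triangle inequality for the matching distance comes from
gluing two matchings along their common middle multiset, after permuting the second one so that
both list the middle points in the same order.
-/

/-- Min-cost perfect matching (earth-mover) distance between two finite
multisets of points of a metric space. -/
noncomputable def mdistM {α : Type*} [MetricSpace α] (s t : Multiset α) : ℝ :=
  sInf {c | ∃ l₁ l₂ : List α, (l₁ : Multiset α) = s ∧ (l₂ : Multiset α) = t ∧
    c = (List.zipWith dist l₁ l₂).sum}

theorem List.Perm.exists_perm_sum_zipWith_eq {α β M : Type*} [AddCommMonoid M]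
    {f : α → β → M} {l₂ l₂' : List α} {l₃ : List β} (h : l₂.Perm l₂')
    (hlen : l₂'.length = l₃.length) :
    ∃ l₃', l₃'.Perm l₃ ∧ (List.zipWith f l₂ l₃').sum = (List.zipWith f l₂' l₃).sum := by
  obtain ⟨q, rfl, hq⟩ :
      Relation.Comp (fun l p => l = p.map Prod.fst) List.Perm l₂ (l₂'.zip l₃) := by
    rw [List.eq_map_comp_perm]
    simpa only [List.map_fst_zip hlen.le] using h
  refine ⟨q.map Prod.snd, by simpa [List.map_snd_zip hlen.ge] using hq.map Prod.snd, ?_⟩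
  rw [← List.map_uncurry_zip_eq_zipWith, ← List.map_uncurry_zip_eq_zipWith, ← List.unzip_fst,
    ← List.unzip_snd, List.zip_unzip]
  exact (hq.map _).sum_eq

theorem List.sum_zipWith_dist_nonneg {α : Type*} [PseudoMetricSpace α] :
    ∀ l₁ l₂ : List α, 0 ≤ (List.zipWith dist l₁ l₂).sum
  | a :: l₁, b :: l₂ => by
    simpa using add_nonneg dist_nonneg (List.sum_zipWith_dist_nonneg l₁ l₂)
  | [], _ | _ :: _, [] => by simp

theorem List.sum_zipWith_dist_le {α : Type*} [PseudoMetricSpace α] :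
    ∀ {l₁ l₂ l₃ : List α}, l₁.length = l₂.length →
    (List.zipWith dist l₁ l₃).sum ≤
      (List.zipWith dist l₁ l₂).sum + (List.zipWith dist l₂ l₃).sum
  | [], [], _, _ => by simp
  | a :: l₁, b :: l₂, [], _ => by simpa using List.sum_zipWith_dist_nonneg (a :: l₁) (b :: l₂)
  | a :: l₁, b :: l₂, c :: l₃, h => by
    simp only [List.zipWith_cons_cons, List.sum_cons]
    have ih := List.sum_zipWith_dist_le (l₃ := l₃) (by simpa using h)
    linarith [dist_triangle a b c]

section MatchingDistance

variable {α : Type*} [MetricSpace α]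

def matchingCosts (s t : Multiset α) : Set ℝ :=
  {c | ∃ l₁ l₂ : List α, (l₁ : Multiset α) = s ∧ (l₂ : Multiset α) = t ∧
    c = (List.zipWith dist l₁ l₂).sum}

theorem mdistM_eq_sInf_matchingCosts (s t : Multiset α) :
    mdistM s t = sInf (matchingCosts s t) := rfl

theorem matchingCosts_nonempty (s t : Multiset α) : (matchingCosts s t).Nonempty :=
  ⟨_, s.toList, t.toList, s.coe_toList, t.coe_toList, rfl⟩

theorem nonneg_of_mem_matchingCosts {s t : Multiset α} {c : ℝ} (hc : c ∈ matchingCosts s t) :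
    0 ≤ c := by
  obtain ⟨l₁, l₂, -, -, rfl⟩ := hc
  exact List.sum_zipWith_dist_nonneg l₁ l₂

theorem bddBelow_matchingCosts (s t : Multiset α) : BddBelow (matchingCosts s t) :=
  ⟨0, fun _ => nonneg_of_mem_matchingCosts⟩

theorem mdistM_nonneg (s t : Multiset α) : 0 ≤ mdistM s t :=
  Real.sInf_nonneg fun _ => nonneg_of_mem_matchingCosts

theorem matchingCosts_comm (s t : Multiset α) : matchingCosts s t = matchingCosts t s := by
  ext c
  constructor <;> rintro ⟨l₁, l₂, h₁, h₂, rfl⟩ <;>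
    exact ⟨l₂, l₁, h₂, h₁, by rw [List.zipWith_comm_of_comm dist_comm]⟩

theorem mdistM_comm (s t : Multiset α) : mdistM s t = mdistM t s := by
  rw [mdistM_eq_sInf_matchingCosts, mdistM_eq_sInf_matchingCosts, matchingCosts_comm]

theorem exists_mem_matchingCosts_le_add {s t u : Multiset α} {a b : ℝ}
    (hst : Multiset.card s = Multiset.card t) (htu : Multiset.card t = Multiset.card u)
    (ha : a ∈ matchingCosts s t) (hb : b ∈ matchingCosts t u) :
    ∃ c ∈ matchingCosts s u, c ≤ a + b := by
  obtain ⟨l₁, l₂, rfl, rfl, rfl⟩ := ha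
  obtain ⟨l₂', l₃, h₂', rfl, rfl⟩ := hb
  have hperm : l₂.Perm l₂' := Multiset.coe_eq_coe.mp h₂'.symm
  obtain ⟨l₃', hl₃', hsum⟩ := hperm.exists_perm_sum_zipWith_eq (f := dist) (l₃ := l₃)
    (by simpa [← hperm.length_eq] using htu)
  refine ⟨_, ⟨l₁, l₃', rfl, Multiset.coe_eq_coe.mpr hl₃', rfl⟩, ?_⟩
  rw [← hsum]
  exact List.sum_zipWith_dist_le (by simpa using hst)

theorem mdistM_triangle {s t u : Multiset α}
    (hst : Multiset.card s = Multiset.card t) (htu : Multiset.card t = Multiset.card u) :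
    mdistM s u ≤ mdistM s t + mdistM t u := by
  simp only [mdistM_eq_sInf_matchingCosts]
  rw [← csInf_add (matchingCosts_nonempty s t) (bddBelow_matchingCosts s t)
    (matchingCosts_nonempty t u) (bddBelow_matchingCosts t u)]
  refine le_csInf ((matchingCosts_nonempty s t).add (matchingCosts_nonempty t u)) ?_
  rintro _ ⟨a, ha, b, hb, rfl⟩
  obtain ⟨c, hc, hle⟩ := exists_mem_matchingCosts_le_add hst htu ha hb
  exact csInf_le_of_le (bddBelow_matchingCosts s u) hc hle

theorem matchingCosts_subset_add_singleton (s t : Multiset α) (a : α) :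
    matchingCosts s t ⊆ matchingCosts (s + {a}) (t + {a}) := by
  rintro _ ⟨l₁, l₂, rfl, rfl, rfl⟩
  refine ⟨a :: l₁, a :: l₂, ?_, ?_, by simp⟩ <;>
    rw [add_comm, Multiset.singleton_add, Multiset.cons_coe]

theorem mdistM_add_singleton_le (s t : Multiset α) (a : α) :
    mdistM (s + {a}) (t + {a}) ≤ mdistM s t :=
  csInf_le_csInf (bddBelow_matchingCosts _ _) (matchingCosts_nonempty s t)
    (matchingCosts_subset_add_singleton s t a)

end MatchingDistance

theorem mdistM_round_le {α : Type*} [MetricSpace α] {P O P' O' : Multiset α} (a : α) {k : ℕ}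
    (hP : Multiset.card P = k) (hO : Multiset.card O = k)
    (hP' : Multiset.card P' = k + 1) (hO' : Multiset.card O' = k + 1) :
    mdistM P' (P + {a}) ≤ mdistM P O + mdistM (O + {a}) O' + mdistM P' O' := by
  have hPa : Multiset.card (P + {a}) = k + 1 := by simp [hP]
  have hOa : Multiset.card (O + {a}) = k + 1 := by simp [hO]
  calc mdistM P' (P + {a})
      ≤ mdistM P' O' + mdistM O' (P + {a}) :=
        mdistM_triangle (hP'.trans hO'.symm) (hO'.trans hPa.symm)
    _ = mdistM P' O' + mdistM (P + {a}) O' := by rw [mdistM_comm O']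
    _ ≤ mdistM P' O' + (mdistM (P + {a}) (O + {a}) + mdistM (O + {a}) O') := by
        gcongr
        exact mdistM_triangle (hPa.trans hOa.symm) (hOa.trans hO'.symm)
    _ ≤ mdistM P' O' + (mdistM P O + mdistM (O + {a}) O') := by
        gcongr
        exact mdistM_add_singleton_le P O a
    _ = mdistM P O + mdistM (O + {a}) O' + mdistM P' O' := by ring

theorem sum_range_le_sum_add_two_mul_sum_of_le {c d η : ℕ → ℝ} {n : ℕ} (hη : ∀ i, 0 ≤ η i)
    (h : ∀ i < n, c i ≤ η i + d i + η (i + 1)) :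
    ∑ i ∈ Finset.range n, c i ≤
      ∑ i ∈ Finset.range n, d i + 2 * ∑ i ∈ Finset.range (n + 1), η i := by
  calc ∑ i ∈ Finset.range n, c i
      ≤ ∑ i ∈ Finset.range n, (η i + d i + η (i + 1)) :=
        Finset.sum_le_sum fun i hi => h i (Finset.mem_range.mp hi)
    _ = ∑ i ∈ Finset.range n, η i + ∑ i ∈ Finset.range n, d i +
          ∑ i ∈ Finset.range n, η (i + 1) := by
        rw [Finset.sum_add_distrib, Finset.sum_add_distrib]
    _ ≤ ∑ i ∈ Finset.range n, d i + 2 * ∑ i ∈ Finset.range (n + 1), η i := by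
        linarith [Finset.sum_range_succ η n, Finset.sum_range_succ' η n, hη 0, hη n]

/-- **Telescoping error bound for FtP matching.** `P i` is the predicted server
set and `OFF i` the offline server set after `i` requests (both of size `i`),
and `r i` is the `(i+1)`-st request. Then for each round `i`,
`dist(P_{i+1}, P_i ∪ {r_{i+1}}) ≤ η_i + d_i + η_{i+1}` where
`η_j = dist(P_j, OFF_j)` and `d_i = dist(OFF_i ∪ {r_{i+1}}, OFF_{i+1})`; and any
cost `C` bounded by `∑_i dist(P_{i+1}, P_i ∪ {r_{i+1}})` (as is the total cost
of Follow-the-Prediction, by the potential argument with `Φ_1 = Φ_n = 0`)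
satisfies `C ≤ OFF + 2η`. -/
theorem ftp_matching_telescope {α : Type*} [MetricSpace α] (n : ℕ)
    (P OFF : ℕ → Finset α) (r : ℕ → α)
    (hP : ∀ i ≤ n, (P i).card = i) (hOFF : ∀ i ≤ n, (OFF i).card = i)
    (C : ℝ)
    (hC : C ≤ ∑ i ∈ Finset.range n, mdistM ((P (i + 1)).val) ((P i).val + {r i})) :
    (∀ i < n, mdistM ((P (i + 1)).val) ((P i).val + {r i}) ≤
      mdistM ((P i).val) ((OFF i).val) +
        mdistM ((OFF i).val + {r i}) ((OFF (i + 1)).val) +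
        mdistM ((P (i + 1)).val) ((OFF (i + 1)).val)) ∧
    C ≤ (∑ i ∈ Finset.range n, mdistM ((OFF i).val + {r i}) ((OFF (i + 1)).val)) +
        2 * ∑ i ∈ Finset.range (n + 1), mdistM ((P i).val) ((OFF i).val) := by
  have hround : ∀ i < n, mdistM ((P (i + 1)).val) ((P i).val + {r i}) ≤
      mdistM ((P i).val) ((OFF i).val) +
        mdistM ((OFF i).val + {r i}) ((OFF (i + 1)).val) +
        mdistM ((P (i + 1)).val) ((OFF (i + 1)).val) := fun i hi =>
    mdistM_round_le (r i) (hP i hi.le) (hOFF i hi.le) (hP (i + 1) hi) (hOFF (i + 1) hi)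
  exact ⟨hround, hC.trans
    (sum_range_le_sum_add_two_mul_sum_of_le (fun i => mdistM_nonneg _ _) hround)⟩
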